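/- Let X be a set equipped with a monoid action of the increasing monoid I, and let x ∈ X. If α_n • x = x for some n ≥ 1, then σ • x = x for every σ in the submonoid I_{≥n} of I generated by the α_i with i ≥ n. -/

import Mathlib

open scoped Classical

noncomputable section

/-- The increasing monoid `I`: the submonoid of `Function.End ℕ+` (functions under
composition) consisting of strictly increasing functions `σ : ℕ+ → ℕ+` such that
`σ n = n + ℓ` for some `ℓ` and all sufficiently large `n`. -/
def IncMonoid : Submonoid (Function.End ℕ+) where
  carrier := {f | StrictMono f ∧ ∃ (l : ℕ) (N : ℕ+), ∀ n : ℕ+, N ≤ n → ((f n : ℕ) = (n : ℕ) + l)}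
  one_mem' := ⟨fun _ _ h => h, 0, 1, fun n _ => by show ((n : ℕ+) : ℕ) = (n : ℕ) + 0; omega⟩
  mul_mem' := by
    rintro f g ⟨hf1, lf, Nf, hf2⟩ ⟨hg1, lg, Ng, hg2⟩
    refine ⟨hf1.comp hg1, lg + lf, max Nf Ng, fun n hn => ?_⟩
    have h1 : (g n : ℕ) = (n : ℕ) + lg := hg2 n (le_trans (le_max_right _ _) hn)
    have h2 : Nf ≤ g n := by
      rw [← PNat.coe_le_coe, h1]
      have : (Nf : ℕ) ≤ (n : ℕ) := (PNat.coe_le_coe _ _).2 (le_trans (le_max_left _ _) hn)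
      omega
    have h3 := hf2 (g n) h2
    show ((f (g n) : ℕ)) = (n : ℕ) + (lg + lf)
    omega

/-- The increasing monoid, as a type. -/
abbrev IncM : Type := IncMonoid

theorem IncM.strictMono (σ : IncM) : StrictMono σ.1 := σ.2.1

theorem IncM.le_apply (σ : IncM) (n : ℕ+) : n ≤ σ.1 n := by
  induction n using PNat.recOn with
  | one => exact (σ.1 1).one_le
  | succ n ih =>
      have h2 : σ.1 n < σ.1 (n + 1) := σ.strictMono (by rw [← PNat.coe_lt_coe]; push_cast; omega)
      rw [← PNat.coe_le_coe] at *
      rw [← PNat.coe_lt_coe] at h2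
      push_cast at *
      omega

/-- The underlying function of the generator `α_k`. -/
def alphaFun (k : ℕ+) : Function.End ℕ+ := fun n => if n < k then n else n + 1

theorem alphaFun_strictMono (k : ℕ+) : StrictMono (alphaFun k) := by
  intro a b hab
  unfold alphaFun
  split_ifs with h1 h2 <;>
    rw [← PNat.coe_lt_coe] at * <;> push_cast at * <;> omega

theorem alphaFun_mem (k : ℕ+) : alphaFun k ∈ IncMonoid := by
  refine ⟨alphaFun_strictMono k, 1, k, fun n hn => ?_⟩
  unfold alphaFun
  rw [if_neg (not_lt.2 hn)]
  push_cast
  ring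

/-- The generator `α_k` of the increasing monoid (`k ≥ 1`). -/
def alpha (k : ℕ+) : IncM := ⟨alphaFun k, alphaFun_mem k⟩

/-- The submonoid `I_{≥ n}` of `I` generated by the `α_i` with `i ≥ n`. -/
def Iges (n : ℕ+) : Submonoid IncM := Submonoid.closure (alpha '' Set.Ici n)

/-- The submonoid `I_{> n}` of `I` generated by the `α_i` with `i > n`. -/
def Igt (n : ℕ) : Submonoid IncM := Submonoid.closure {s | ∃ i : ℕ+, n < (i : ℕ) ∧ s = alpha i}

/-- The monoid algebra `k[I]` of the increasing monoid. -/
abbrev IncAlg (k : Type*) [Field k] : Type _ := MonoidAlgebra k IncM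

/-- The image of `σ ∈ I` in the monoid algebra `k[I]`. -/
abbrev ofInc (k : Type*) [Field k] (σ : IncM) : IncAlg k := MonoidAlgebra.of k IncM σ

/-- A `k[I]`-module is smooth if every vector is fixed by some `I_{>n}`. -/
def IsSmoothMod (k : Type*) [Field k] (M : Type*) [AddCommMonoid M]
    [Module (IncAlg k) M] : Prop :=
  ∀ x : M, ∃ n : ℕ, ∀ σ ∈ Igt n, ofInc k σ • x = x

/-! ### The principal modules `A^r` -/

/-- Index set for the basis of the principal module `A^r`:
strictly increasing `r`-tuples of positive integers. -/
def Idx (r : ℕ) : Type := {v : Fin r → ℕ+ // StrictMono v}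

/-- The action of `σ ∈ I` on the index set of `A^r`. -/
def idxAct {r : ℕ} (σ : IncM) (t : Idx r) : Idx r :=
  ⟨σ.1 ∘ t.1, (IncM.strictMono σ).comp t.2⟩

/-- The representation of the increasing monoid on the principal module `A^r`. -/
def prinRep (k : Type*) [Field k] (r : ℕ) : Representation k IncM (Idx r →₀ k) where
  toFun σ := Finsupp.lmapDomain k k (idxAct σ)
  map_one' := LinearMap.ext fun v => by
    have h : (idxAct (1 : IncM) : Idx r → Idx r) = id := funext fun t => rfl
    simp [Finsupp.lmapDomain_apply, h, Finsupp.mapDomain_id]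
  map_mul' := fun σ τ => LinearMap.ext fun v => by
    have h : (idxAct (σ * τ) : Idx r → Idx r) = (idxAct σ) ∘ (idxAct τ) :=
      funext fun t => rfl
    show Finsupp.lmapDomain k k (idxAct (σ * τ)) v =
      Finsupp.lmapDomain k k (idxAct σ) (Finsupp.lmapDomain k k (idxAct τ) v)
    simp [Finsupp.lmapDomain_apply, h, Finsupp.mapDomain_comp]

/-- The principal module `A^r`, as a module over the monoid algebra `k[I]`. -/
abbrev PrinMod (k : Type*) [Field k] (r : ℕ) : Type _ := (prinRep k r).asModule

/-- The basis vector `e_t` of the principal module `A^r`. -/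
def ePrin (k : Type*) [Field k] {r : ℕ} (t : Idx r) : PrinMod k r :=
  (prinRep k r).asModuleEquiv.symm (Finsupp.single t 1)

/-- The tuple `(1, 2, …, r)` indexing the canonical generator `e_{1,…,r}` of `A^r`. -/
def iotaIdx (r : ℕ) : Idx r :=
  ⟨fun i => ⟨(i : ℕ) + 1, Nat.succ_pos _⟩, fun a b h => by
    show (a : ℕ) + 1 < (b : ℕ) + 1; have := Fin.lt_def.1 h; omega⟩

/-! ### The simple modules `B^n` -/

/-- `σ ∈ I` fixes the natural number `n`, with the convention `σ 0 = 0`. -/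
def fixesNat (σ : IncM) (n : ℕ) : Prop := ∀ h : 0 < n, σ.1 ⟨n, h⟩ = ⟨n, h⟩

theorem fixesNat_mul (σ τ : IncM) (n : ℕ) :
    fixesNat (σ * τ) n ↔ fixesNat σ n ∧ fixesNat τ n := by
  rcases Nat.eq_zero_or_pos n with h0 | h0
  · subst h0
    constructor
    · exact fun _ => ⟨fun h => absurd h (lt_irrefl 0), fun h => absurd h (lt_irrefl 0)⟩
    · exact fun _ h => absurd h (lt_irrefl 0)
  · set p : ℕ+ := ⟨n, h0⟩
    have happ : ∀ h : 0 < n, (σ * τ).1 ⟨n, h⟩ = σ.1 (τ.1 ⟨n, h⟩) := fun _ => rfl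
    constructor
    · intro h
      have hfix : σ.1 (τ.1 p) = p := h h0
      have h1 : p ≤ τ.1 p := τ.le_apply p
      have h2 : τ.1 p ≤ σ.1 (τ.1 p) := σ.le_apply _
      have hτp : τ.1 p = p := le_antisymm (h2.trans_eq hfix) h1
      have hσp : σ.1 p = p := by rw [hτp] at hfix; exact hfix
      exact ⟨fun _ => hσp, fun _ => hτp⟩
    · rintro ⟨hσ, hτ⟩ h
      rw [happ h]
      have := hτ h0
      rw [this, hσ h0]

/-- The representation of the increasing monoid on the simple module `B^n`:
`σ` acts by the identity if `σ(n) = n` (with `σ(0) = 0`) and by `0` otherwise. -/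
def bRep (k : Type*) [Field k] (n : ℕ) : Representation k IncM k where
  toFun σ := if fixesNat σ n then 1 else 0
  map_one' := by
    try dsimp only
    rw [if_pos]
    intro h
    rfl
  map_mul' := fun σ τ => by
    try dsimp only
    by_cases hσ : fixesNat σ n
    · by_cases hτ : fixesNat τ n
      · rw [if_pos ((fixesNat_mul σ τ n).2 ⟨hσ, hτ⟩), if_pos hσ, if_pos hτ, one_mul]
      · rw [if_neg (fun h => hτ ((fixesNat_mul σ τ n).1 h).2), if_pos hσ, if_neg hτ, one_mul]
    · by_cases hτ : fixesNat τ n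
      · rw [if_neg (fun h => hσ ((fixesNat_mul σ τ n).1 h).1), if_neg hσ, if_pos hτ, mul_one]
      · rw [if_neg (fun h => hσ ((fixesNat_mul σ τ n).1 h).1), if_neg hσ, if_neg hτ, mul_zero]

/-- The simple module `B^n`, as a module over the monoid algebra `k[I]`. -/
abbrev BMod (k : Type*) [Field k] (n : ℕ) : Type _ := (bRep k n).asModule

/-! Both `α_{k+1} α_k` and `α_k α_k` fix every `m < k` and shift every `m ≥ k` by two, so a point
fixed by `α_k` is also fixed by `α_{k+1}`. By induction it is fixed by every generator `α_i`,
`i ≥ k`, and hence by the submonoid they generate. -/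

theorem alpha_succ_mul_alpha (k : ℕ+) : alpha (k + 1) * alpha k = alpha k * alpha k := by
  apply Subtype.ext
  funext m
  show alphaFun (k + 1) (alphaFun k m) = alphaFun k (alphaFun k m)
  unfold alphaFun
  split_ifs <;> first | rfl | (exfalso; rw [← PNat.coe_lt_coe] at *; push_cast at *; omega)

section

variable {X : Type*} [MulAction IncM X] {x : X}

theorem alpha_succ_smul_eq_self {k : ℕ+} (h : alpha k • x = x) : alpha (k + 1) • x = x :=
  calc alpha (k + 1) • x = (alpha (k + 1) * alpha k) • x := by rw [mul_smul, h]
    _ = x := by rw [alpha_succ_mul_alpha, mul_smul, h, h]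

theorem alpha_smul_eq_self_of_le {k i : ℕ+} (h : alpha k • x = x) (hki : k ≤ i) :
    alpha i • x = x := by
  induction hki using Succ.rec with
  | rfl => exact h
  | succ j _ ih => rw [PNat.succ_eq_add_one]; exact alpha_succ_smul_eq_self ih

end

/-- If `x` in an `I`-set is fixed by `α_n` then it is fixed
by all of `I_{≥ n}`. -/
theorem fixed_by_alpha_fixed_by_Iges (X : Type*) [MulAction IncM X] (x : X)
    (n : ℕ+) (h : alpha n • x = x) : ∀ σ ∈ Iges n, σ • x = x := by
  have hle : Iges n ≤ MulAction.stabilizerSubmonoid IncM x :=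
    Submonoid.closure_le.2 <| Set.image_subset_iff.2 fun _ hi => alpha_smul_eq_self_of_le h hi
  exact fun σ hσ => hle hσ

end
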